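/- Let R be a commutative local ring of Krull dimension at most 1 whose nilradical is a prime ideal, and let t be an element of the maximal ideal of R which does not lie in the nilradical. Then the localization R[1/t] of R away from t is a nonzero local ring; in fact it has a unique prime ideal. -/

import Mathlib

/-!
A prime of `R[1/t]` is a prime of `R` not containing `t`. Since `dim R ≤ 1` and the nilradical is
prime, every prime of `R` is either the nilradical or the maximal ideal; the condition on `t`
rules out the maximal ideal and keeps the nilradical, so `Spec R[1/t]` is a single point.
-/

open PrimeSpectrum IsLocalRing

theorem Ideal.IsPrime.eq_nilradical_or_isMaximal {R : Type*} [CommRing R] [Ring.KrullDimLE 1 R]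
    {p : Ideal R} (hp : p.IsPrime) (hnil : (nilradical R).IsPrime) :
    p = nilradical R ∨ p.IsMaximal :=
  (Ring.krullDimLE_one_iff.mp ‹_› p hp).imp_left fun hmin ↦
    (minimalPrimes_eq_minimals (R := R) ▸ hmin).eq_of_le hnil (nilradical_le_prime p) |>.symm

theorem IsLocalRing.basicOpen_eq_singleton_nilradical {R : Type*} [CommRing R] [IsLocalRing R]
    [Ring.KrullDimLE 1 R] (hnil : (nilradical R).IsPrime) {t : R} (ht : t ∈ maximalIdeal R)
    (htnil : t ∉ nilradical R) :
    (basicOpen t : Set (PrimeSpectrum R)) = {⟨nilradical R, hnil⟩} := by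
  ext p
  simp only [SetLike.mem_coe, mem_basicOpen, Set.mem_singleton_iff, PrimeSpectrum.ext_iff]
  refine ⟨fun htp ↦ ?_, fun hp ↦ hp ▸ htnil⟩
  refine (p.isPrime.eq_nilradical_or_isMaximal hnil).resolve_right fun hmax ↦ htp ?_
  rwa [eq_maximalIdeal hmax]

theorem IsLocalization.Away.existsUnique_isPrime_of_basicOpen_eq_singleton {R S : Type*}
    [CommSemiring R] [CommSemiring S] [Algebra R S] {r : R} [IsLocalization.Away r S]
    {p : PrimeSpectrum R} (h : (basicOpen r : Set (PrimeSpectrum R)) = {p}) :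
    ∃! P : Ideal S, P.IsPrime := by
  have hrange := localization_away_comap_range S r
  rw [h] at hrange
  obtain ⟨P, hP⟩ : p ∈ Set.range (comap (algebraMap R S)) := hrange ▸ rfl
  refine ⟨P.asIdeal, P.isPrime, fun Q hQ ↦ ?_⟩
  have hQ : comap (algebraMap R S) ⟨Q, hQ⟩ = p := hrange.subset ⟨_, rfl⟩
  exact congrArg PrimeSpectrum.asIdeal
    (localization_comap_injective S (.powers r) (hQ.trans hP.symm))

theorem IsLocalRing.of_existsUnique_isPrime {S : Type*} [CommSemiring S]
    (h : ∃! P : Ideal S, P.IsPrime) : IsLocalRing S := by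
  obtain ⟨P, hP, huniq⟩ := h
  have : Nontrivial S := nonempty_iff_nontrivial.mp ⟨⟨P, hP⟩⟩
  obtain ⟨m, hm⟩ := Ideal.exists_maximal S
  exact of_unique_max_ideal
    ⟨m, hm, fun I hI ↦ (huniq I hI.isPrime).trans (huniq m hm.isPrime).symm⟩

/-- Let `R` be a commutative local ring of Krull dimension at most `1` whose nilradical is a
prime ideal, and let `t` be an element of the maximal ideal of `R` not lying in the nilradical.
Then the localization `R[1/t]` of `R` away from `t` is a nonzero local ring; in fact it has a
unique prime ideal. -/
theorem localizationAway_isLocalRing_of_ringKrullDim_le_one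
    {R : Type*} [CommRing R] [IsLocalRing R]
    (hdim : ringKrullDim R ≤ 1)
    (hnil : (nilradical R).IsPrime)
    {t : R} (ht : t ∈ IsLocalRing.maximalIdeal R) (htnil : t ∉ nilradical R) :
    Nontrivial (Localization.Away t) ∧ IsLocalRing (Localization.Away t) ∧
      ∃! P : Ideal (Localization.Away t), P.IsPrime := by
  have : Ring.KrullDimLE 1 R := Ring.krullDimLE_iff.mpr (by exact_mod_cast hdim)
  have hunique : ∃! P : Ideal (Localization.Away t), P.IsPrime :=
    IsLocalization.Away.existsUnique_isPrime_of_basicOpen_eq_singleton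
      (basicOpen_eq_singleton_nilradical hnil ht htnil)
  obtain ⟨P, hP⟩ := hunique.exists
  exact ⟨nonempty_iff_nontrivial.mp ⟨⟨P, hP⟩⟩, of_existsUnique_isPrime hunique, hunique⟩
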